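/- arXiv:2306.04651 — 3 statements merged into one kernel-verified Lean document; each statement's English description precedes it below -/
import Mathlib

section
/- If S(A,b) is nonempty and there exists an index i such that ∑_j a_{ij} = b_i and a_{ij} ≠ 0 for every j, then (1,1,...,1) is the unique solution of the system, i.e., S(A,b) = {(1,...,1)}. -/
open Finset

noncomputable section

/-- Łukasiewicz t-norm. -/
def TL (a x : ℝ) : ℝ := max (a + x - 1) 0

/-- Solution set of the addition-Łukasiewicz system. -/
def Sset {m n : ℕ} (A : Fin m → Fin n → ℝ) (b : Fin m → ℝ) : Set (Fin n → ℝ) :=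
  {x | (∀ j, x j ∈ Set.Icc (0:ℝ) 1) ∧ ∀ i, b i ≤ ∑ j, TL (A i j) (x j)}

/-- Minimal solution. -/
def IsMinimalSol {m n : ℕ} (A : Fin m → Fin n → ℝ) (b : Fin m → ℝ) (x : Fin n → ℝ) : Prop :=
  x ∈ Sset A b ∧ ∀ y ∈ Sset A b, y ≤ x → y = x

/-- The set F_j(z). -/
def Fset {m n : ℕ} (A : Fin m → Fin n → ℝ) (b : Fin m → ℝ) (j : Fin n) (z : Fin n → ℝ) :
    Set ℝ :=
  {t | t ∈ Set.Icc (0:ℝ) 1 ∧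
    ∀ i, b i ≤ TL (A i j) t + ∑ k ∈ Finset.univ.erase j, TL (A i k) (z k)}

/-- Objective Z(x) = max_j x_j. -/
def Zf {n : ℕ} (x : Fin n → ℝ) : ℝ := ⨆ j, x j

/-- Optimal solution of the minimax problem. -/
def IsOptimal {m n : ℕ} (A : Fin m → Fin n → ℝ) (b : Fin m → ℝ) (x : Fin n → ℝ) : Prop :=
  x ∈ Sset A b ∧ ∀ y ∈ Sset A b, Zf x ≤ Zf y

theorem TL_le_left {a x : ℝ} (ha : 0 ≤ a) (hx : x ≤ 1) : TL a x ≤ a :=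
  max_le (by linarith) ha

theorem eq_one_of_TL_eq_left {a x : ℝ} (ha : a ≠ 0) (h : TL a x = a) : x = 1 := by
  unfold TL at h
  rcases le_or_gt (a + x - 1) 0 with hneg | hpos
  · exact absurd (h.symm.trans (max_eq_right hneg)) ha
  · linarith [max_eq_left hpos.le]

theorem eq_one_of_mem_Sset {m n : ℕ} {A : Fin m → Fin n → ℝ} {b : Fin m → ℝ} {x : Fin n → ℝ}
    (hx : x ∈ Sset A b) (i : Fin m) (hA : ∀ j, 0 ≤ A i j) (hsum : ∑ j, A i j ≤ b i)
    (hnz : ∀ j, A i j ≠ 0) : x = fun _ => 1 := by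
  obtain ⟨hx01, hrows⟩ := hx
  have hle : ∀ j ∈ univ, TL (A i j) (x j) ≤ A i j := fun j _ => TL_le_left (hA j) (hx01 j).2
  have hterm : ∀ j ∈ univ, TL (A i j) (x j) = A i j :=
    (sum_eq_sum_iff_of_le hle).mp ((sum_le_sum hle).antisymm (hsum.trans (hrows i)))
  exact funext fun j => eq_one_of_TL_eq_left (hnz j) (hterm j (mem_univ j))

theorem stmt4_general {m n : ℕ} (A : Fin m → Fin n → ℝ) (b : Fin m → ℝ)
    (hA : ∀ i j, A i j ∈ Set.Icc (0:ℝ) 1)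
    (hS : (Sset A b).Nonempty)
    (i : Fin m) (hsum : ∑ j, A i j = b i) (hnz : ∀ j, A i j ≠ 0) :
    Sset A b = {fun _ : Fin n => (1:ℝ)} :=
  Set.eq_singleton_iff_nonempty_unique_mem.mpr
    ⟨hS, fun _ hx => eq_one_of_mem_Sset hx i (fun j => (hA i j).1) hsum.le hnz⟩

theorem stmt4 {m n : ℕ} (A : Fin m → Fin n → ℝ) (b : Fin m → ℝ)
    (hA : ∀ i j, A i j ∈ Set.Icc (0:ℝ) 1) (hb : ∀ i, 0 < b i)
    (hS : (Sset A b).Nonempty)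
    (i : Fin m) (hsum : ∑ j, A i j = b i) (hnz : ∀ j, A i j ≠ 0) :
    Sset A b = {fun _ : Fin n => (1:ℝ)} :=
  stmt4_general A b hA hS i hsum hnz
end
end

section
/- If S(A,b) ≠ ∅, then for each j the set of j-th coordinates of solutions equals F_j(1̂), i.e., {x_j : x ∈ S(A,b)} = {t ∈ [0,1] : for all i, T_L(a_{ij}, t) + ∑_{k ≠ j} a_{ik} ≥ b_i}. -/
open Finset

noncomputable section

/-! Every solution lies below 1̂ and `TL a` is monotone, so raising the other coordinates to `1`
only helps; conversely, 1̂ with its `j`-th coordinate replaced by `t ∈ F_j(1̂)` is a solution. -/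

lemma TL_monotone (a : ℝ) : Monotone (TL a) :=
  fun _ _ h => max_le_max (by linarith) le_rfl

section

variable {m n : ℕ} (A : Fin m → Fin n → ℝ) (b : Fin m → ℝ)

lemma apply_mem_Fset_of_mem_Sset {x z : Fin n → ℝ} (hx : x ∈ Sset A b) (hxz : x ≤ z)
    (j : Fin n) : x j ∈ Fset A b j z := by
  refine ⟨hx.1 j, fun i => (hx.2 i).trans ?_⟩
  rw [← add_sum_erase _ _ (mem_univ j)]
  gcongr with k
  exact TL_monotone _ (hxz k)

lemma update_mem_Sset_of_mem_Fset {z : Fin n → ℝ} (hz : ∀ k, z k ∈ Set.Icc (0:ℝ) 1)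
    {j : Fin n} {t : ℝ} (ht : t ∈ Fset A b j z) : Function.update z j t ∈ Sset A b := by
  refine ⟨fun k => ?_, fun i => ?_⟩
  · rcases eq_or_ne k j with rfl | hk
    · simpa using ht.1
    · simpa [Function.update_of_ne hk] using hz k
  · rw [← add_sum_erase _ _ (mem_univ j), Function.update_self]
    refine (ht.2 i).trans_eq ?_
    congr 1
    refine sum_congr rfl fun k hk => ?_
    rw [Function.update_of_ne (ne_of_mem_erase hk)]

end

theorem stmt9_general {m n : ℕ} (A : Fin m → Fin n → ℝ) (b : Fin m → ℝ)
    (j : Fin n) :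
    (fun x : Fin n → ℝ => x j) '' Sset A b = Fset A b j (fun _ => (1:ℝ)) := by
  ext t
  constructor
  · rintro ⟨x, hx, rfl⟩
    exact apply_mem_Fset_of_mem_Sset A b hx (fun k => (hx.1 k).2) j
  · intro ht
    refine ⟨_, update_mem_Sset_of_mem_Fset A b (fun _ => ⟨zero_le_one, le_rfl⟩) ht, ?_⟩
    simp

theorem stmt9 {m n : ℕ} (A : Fin m → Fin n → ℝ) (b : Fin m → ℝ)
    (hA : ∀ i j, A i j ∈ Set.Icc (0:ℝ) 1) (hb : ∀ i, 0 < b i)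
    (hS : (Sset A b).Nonempty) (j : Fin n) :
    (fun x : Fin n → ℝ => x j) '' Sset A b = Fset A b j (fun _ => (1:ℝ)) :=
  stmt9_general A b j
end
end

section
/- For every x ∈ S(A,b) there exists a minimal solution x* of the system with x* ≤ x componentwise. -/
open Finset

noncomputable section

/-
Every solution dominates a minimal one because the solutions below a given solution `x` form a
nonempty compact set, on which the continuous, strictly monotone function `y ↦ ∑ j, y j`
attains its minimum; a minimizer of a strictly monotone function is a minimal element.
-/

lemma IsCompact.exists_minimal_le {α : Type*} [TopologicalSpace α] [Preorder α]
    [ClosedIicTopology α] {K : Set α} (hK : IsCompact K) {f : α → ℝ} (hf : Continuous f)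
    (hf_mono : StrictMono f) {x : α} (hx : x ∈ K) :
    ∃ y, Minimal (· ∈ K) y ∧ y ≤ x := by
  obtain ⟨y, ⟨hyK, hyx⟩, hy_min⟩ :=
    (hK.inter_right isClosed_Iic).exists_isMinOn ⟨x, hx, le_rfl⟩ hf.continuousOn
  refine ⟨y, ⟨hyK, fun z hzK hzy => ?_⟩, hyx⟩
  by_contra hyz
  have : f y ≤ f z := hy_min ⟨hzK, hzy.trans hyx⟩
  exact (hf_mono (lt_of_le_not_ge hzy hyz)).not_ge this

lemma strictMono_sum_apply {ι : Type*} [Fintype ι] :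
    StrictMono (fun y : ι → ℝ => ∑ i, y i) := by
  intro z y hzy
  obtain ⟨hle, i, hi⟩ := Pi.lt_def.mp hzy
  exact Finset.sum_lt_sum (fun j _ => hle j) ⟨i, Finset.mem_univ i, hi⟩

@[fun_prop]
lemma continuous_TL (a : ℝ) : Continuous (TL a) := by
  unfold TL
  fun_prop

lemma isCompact_Sset {m n : ℕ} (A : Fin m → Fin n → ℝ) (b : Fin m → ℝ) :
    IsCompact (Sset A b) := by
  have h_closed : IsClosed (Sset A b) := by
    simp only [Sset, Set.ofPred_and, Set.ofPred_forall]
    exact (isClosed_iInter fun j => isClosed_Icc.preimage (continuous_apply j)).inter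
      (isClosed_iInter fun i => isClosed_le continuous_const (by fun_prop))
  exact (isCompact_univ_pi fun _ => isCompact_Icc).of_isClosed_subset h_closed
    fun y hy j _ => hy.1 j

lemma isMinimalSol_iff_minimal {m n : ℕ} (A : Fin m → Fin n → ℝ) (b : Fin m → ℝ)
    (x : Fin n → ℝ) : IsMinimalSol A b x ↔ Minimal (· ∈ Sset A b) x :=
  and_congr_right fun _ =>
    forall₂_congr fun _ _ => imp_congr_right fun hyx => ⟨fun h => h ▸ le_rfl, le_antisymm hyx⟩

theorem stmt13_general {m n : ℕ} (A : Fin m → Fin n → ℝ) (b : Fin m → ℝ)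
    (x : Fin n → ℝ) (hx : x ∈ Sset A b) :
    ∃ xs, IsMinimalSol A b xs ∧ xs ≤ x := by
  obtain ⟨xs, hxs_min, hxs_le⟩ := (isCompact_Sset A b).exists_minimal_le
    (continuous_finsetSum _ fun j _ => continuous_apply j) strictMono_sum_apply hx
  exact ⟨xs, (isMinimalSol_iff_minimal A b xs).mpr hxs_min, hxs_le⟩

theorem stmt13 {m n : ℕ} (A : Fin m → Fin n → ℝ) (b : Fin m → ℝ)
    (hA : ∀ i j, A i j ∈ Set.Icc (0:ℝ) 1) (hb : ∀ i, 0 < b i)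
    (x : Fin n → ℝ) (hx : x ∈ Sset A b) :
    ∃ xs, IsMinimalSol A b xs ∧ xs ≤ x :=
  stmt13_general A b x hx
end
end
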